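/- Let (C, R) be a weakly reversible chemical reaction network on N species and let x : [0,∞) → ℝ^N_{>0} be a trajectory of the associated non-autonomous mass-action system with bounded kinetics. Suppose x(t) remains bounded and dist(x(t), ∂ℝ^N_{≥0}) → 0 as t → ∞ (equivalently, min_i x_i(t) → 0). Then at least one of the following holds: (C1) for every x̄ ∈ ℝ^N_{>0} there exists T > 0 such that for all t > T, Σ_{y_k → y_k' ∈ R} κ_k(t) x(t)^{y_k} (y_k' − y_k) · (ln x(t) − ln x̄) < 0, where ln is applied componentwise; or (C2) there exists a sequence of times t_n → ∞ such that x_n := x(t_n) converges to a point z on the boundary of ℝ^N_{≥0}, the set of complexes C is partitioned along (x_n) with tiers T_1, …, T_P, and the highest tier T_1 is a union of linkage classes of (C, R). -/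

import Mathlib

open Filter

/-- A chemical reaction network on `N` species: a finite set `C ⊆ ℤ^N_{≥0}` of complexes
and a finite set `R` of reactions `y → y'` with `y ≠ y'`, both endpoints complexes,
such that every complex takes part in at least one reaction. -/
def IsNetwork {N : ℕ} (C : Finset (Fin N → ℕ)) (R : Finset ((Fin N → ℕ) × (Fin N → ℕ))) : Prop :=
  (∀ r ∈ R, r.1 ∈ C ∧ r.2 ∈ C ∧ r.1 ≠ r.2) ∧ (∀ y ∈ C, ∃ r ∈ R, r.1 = y ∨ r.2 = y)

/-- Directed edge of the reaction diagram. -/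
def dirStep {N : ℕ} (R : Finset ((Fin N → ℕ) × (Fin N → ℕ))) (a b : Fin N → ℕ) : Prop :=
  (a, b) ∈ R

/-- Undirected edge of the reaction diagram. -/
def symStep {N : ℕ} (R : Finset ((Fin N → ℕ) × (Fin N → ℕ))) (a b : Fin N → ℕ) : Prop :=
  (a, b) ∈ R ∨ (b, a) ∈ R

/-- A network is weakly reversible when each linkage class (connected component of the
reaction diagram, ignoring directions) is strongly connected as a directed graph:
whenever `b` is reachable from `a` ignoring directions, it is reachable along
directed reactions. -/
def WeaklyReversible {N : ℕ} (R : Finset ((Fin N → ℕ) × (Fin N → ℕ))) : Prop :=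
  ∀ a b, Relation.ReflTransGen (symStep R) a b → Relation.ReflTransGen (dirStep R) a b

/-- The mass-action monomial `x^y = ∏ i, (x i)^(y i)` (with the convention `0^0 = 1`). -/
noncomputable def monom {N : ℕ} (x : Fin N → ℝ) (y : Fin N → ℕ) : ℝ := ∏ i, x i ^ y i

/-- A complex, viewed as a real vector. -/
def cv {N : ℕ} (y : Fin N → ℕ) : Fin N → ℝ := fun i => (y i : ℝ)

/-- The set of complexes `C` is partitioned along the sequence `x` into the ordered
tiers `T 0 ≻ T 1 ≻ ⋯ ≻ T (P-1)` with constant `M > 1`. -/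
def PartitionedAlong {N P : ℕ} (C : Finset (Fin N → ℕ)) (x : ℕ → Fin N → ℝ)
    (T : Fin P → Set (Fin N → ℕ)) (M : ℝ) : Prop :=
  1 < M ∧
  (∀ i, (T i).Nonempty) ∧
  (∀ i j, i ≠ j → Disjoint (T i) (T j)) ∧
  (⋃ i, T i) = (C : Set (Fin N → ℕ)) ∧
  (∀ i : Fin P, ∀ yj ∈ T i, ∀ yk ∈ T i, ∀ n : ℕ,
    1 / M ≤ monom (x n) yk / monom (x n) yj ∧ monom (x n) yk / monom (x n) yj ≤ M) ∧
  (∀ i j : Fin P, i < j → ∀ yk ∈ T i, ∀ yj ∈ T j,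
    Tendsto (fun n => monom (x n) yk / monom (x n) yj) atTop atTop)

/-- `T` is a (nonempty) union of linkage classes of the network `(C, R)`. -/
def IsUnionOfLinkageClasses {N : ℕ} (C : Finset (Fin N → ℕ))
    (R : Finset ((Fin N → ℕ) × (Fin N → ℕ))) (T : Set (Fin N → ℕ)) : Prop :=
  T.Nonempty ∧ ∀ y ∈ T, ∀ y' ∈ C, Relation.ReflTransGen (symStep R) y y' → y' ∈ T

/-!
If (C1) fails for some `x̄`, there are times `tₙ → ∞` at which `d/dt V_x̄(x(t)) ≥ 0`, where
`V_x̄ = ∑ᵢ xᵢ (ln xᵢ - ln x̄ᵢ - 1)`. By compactness we may assume that `x(tₙ)` converges (to a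
boundary point, since `minᵢ xᵢ → 0`) and that every ratio `x(tₙ)^y / x(tₙ)^y'` converges in
`[0, ∞]`; ranking complexes by how many complexes dominate them then yields the tiers. If the
top tier `T₁` were not a union of linkage classes, weak reversibility would give a reaction
`a → b` leaving it. Its contribution `κ x^a ln (x^b / x^a) ≤ -η x^a ln (x^a / x^b)` is of larger
order than `x^a`, while every other contribution is `O(x^a)` because `x^a` is maximal up to a
constant; so `d/dt V_x̄ < 0` at some `tₙ`, a contradiction.
-/

open Topology

lemma monom_pos {N : ℕ} {x : Fin N → ℝ} (hx : ∀ i, 0 < x i) (y : Fin N → ℕ) : 0 < monom x y :=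
  Finset.prod_pos fun i _ => pow_pos (hx i) _

lemma log_monom {N : ℕ} {x : Fin N → ℝ} (hx : ∀ i, 0 < x i) (y : Fin N → ℕ) :
    Real.log (monom x y) = ∑ i, cv y i * Real.log (x i) := by
  simp [monom, cv, Real.log_prod (fun i _ => (pow_pos (hx i) _).ne'), Real.log_pow]

lemma sum_mul_log_sub_log_eq {N : ℕ} {x : Fin N → ℝ} (hx : ∀ i, 0 < x i) (xb : Fin N → ℝ)
    (y y' : Fin N → ℕ) :
    ∑ i, (cv y' i - cv y i) * (Real.log (x i) - Real.log (xb i)) =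
      Real.log (monom x y') - Real.log (monom x y) - ∑ i, (cv y' i - cv y i) * Real.log (xb i) := by
  simp only [log_monom hx, mul_sub, sub_mul, Finset.sum_sub_distrib]

lemma mul_log_sub_log_le {u v : ℝ} (hu : 0 < u) (hv : 0 < v) :
    u * (Real.log v - Real.log u) ≤ v := by
  have h := Real.log_le_sub_one_of_pos (div_pos hv hu)
  rw [Real.log_div hv.ne' hu.ne'] at h
  have h' := mul_le_mul_of_nonneg_left h hu.le
  have hvu : u * (v / u - 1) = v - u := by field_simp
  linarith

lemma mul_mul_log_sub_log_sub_le {k K u v c B : ℝ} (hk : 0 ≤ k) (hkK : k ≤ K) (hu : 0 < u)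
    (hv : 0 < v) (huB : u ≤ B) (hvB : v ≤ B) :
    k * u * (Real.log v - Real.log u - c) ≤ K * B * (1 + |c|) := by
  have hB : 0 ≤ B := hu.le.trans huB
  have h : u * (Real.log v - Real.log u - c) ≤ B * (1 + |c|) := by
    nlinarith [mul_log_sub_log_le hu hv, mul_le_mul_of_nonneg_right huB (abs_nonneg c),
      mul_le_mul_of_nonneg_left (neg_le_abs c) hu.le]
  calc k * u * (Real.log v - Real.log u - c) = k * (u * (Real.log v - Real.log u - c)) := by ring
    _ ≤ k * (B * (1 + |c|)) := mul_le_mul_of_nonneg_left h hk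
    _ ≤ K * (B * (1 + |c|)) := mul_le_mul_of_nonneg_right hkK (by positivity)
    _ = K * B * (1 + |c|) := by ring

lemma eq_of_hasDerivAt_zero {E : Type*} [NormedAddCommGroup E] [NormedSpace ℝ E] {x : ℝ → E}
    (h : ∀ t, 0 ≤ t → HasDerivAt x 0 t) {t : ℝ} (ht : 0 ≤ t) : x t = x 0 :=
  constant_of_has_deriv_right_zero (fun s hs => (h s hs.1).continuousAt.continuousWithinAt)
    (fun s hs => (h s hs.1).hasDerivWithinAt) t ⟨ht, le_rfl⟩

lemma ciInf_pos_of_finite {ι : Type*} [Finite ι] [Nonempty ι] {v : ι → ℝ} (hv : ∀ i, 0 < v i) :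
    0 < ⨅ i, v i := by
  obtain ⟨i, hi⟩ := exists_eq_ciInf_of_finite (f := v)
  exact hi ▸ hv i

lemma continuous_ciInf_apply {ι : Type*} [Fintype ι] [Nonempty ι] :
    Continuous fun v : ι → ℝ => ⨅ i, v i := by
  simp_rw [← Finset.inf'_univ_eq_ciInf]
  exact Continuous.finset_inf'_apply _ fun i _ => continuous_apply i

lemma exists_eq_zero_of_tendsto_ciInf {ι : Type*} [Fintype ι] [Nonempty ι] {u : ℕ → ι → ℝ}
    {z : ι → ℝ} (hu : Tendsto u atTop (𝓝 z)) (h : Tendsto (fun n => ⨅ i, u n i) atTop (𝓝 0)) :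
    ∃ i, z i = 0 := by
  obtain ⟨i, hi⟩ := exists_eq_ciInf_of_finite (f := z)
  exact ⟨i, hi.trans (tendsto_nhds_unique ((continuous_ciInf_apply.tendsto z).comp hu) h)⟩

lemma exists_bounds_of_tendsto_pos {r : ℕ → ℝ} (hr : ∀ n, 0 < r n) {l : ℝ} (hl : 0 < l)
    (h : Tendsto r atTop (𝓝 l)) : ∃ M, 1 < M ∧ ∀ n, 1 / M ≤ r n ∧ r n ≤ M := by
  obtain ⟨A, hA⟩ := h.bddAbove_range
  obtain ⟨A', hA'⟩ := (h.inv₀ hl.ne').bddAbove_range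
  have hM : 1 < max 2 (max A A') := lt_max_of_lt_left one_lt_two
  refine ⟨max 2 (max A A'), hM, fun n => ⟨?_, ?_⟩⟩
  · rw [one_div_le (by linarith) (hr n), one_div]
    exact (hA' ⟨n, rfl⟩).trans (le_max_of_le_right (le_max_right _ _))
  · exact (hA ⟨n, rfl⟩).trans (le_max_of_le_right (le_max_left _ _))

section Dominance

variable {α : Type*}

def Dominates (m : α → ℕ → ℝ) (y y' : α) : Prop :=
  Tendsto (fun n => m y n / m y' n) atTop atTop

def Comparable (m : α → ℕ → ℝ) (y y' : α) : Prop :=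
  ∃ M, 1 < M ∧ ∀ n, 1 / M ≤ m y n / m y' n ∧ m y n / m y' n ≤ M

def AsymptoticallyOrdered (m : α → ℕ → ℝ) : Prop :=
  ∀ y y', Dominates m y y' ∨ Dominates m y' y ∨ Comparable m y y'

variable {m : α → ℕ → ℝ} {y y' y'' : α}

lemma Dominates.trans (hm : ∀ y n, 0 < m y n) (h : Dominates m y y') (h' : Dominates m y' y'') :
    Dominates m y y'' := by
  have hprod := h.atTop_mul_atTop₀ h'
  simp only [div_mul_div_cancel₀ (hm y' _).ne'] at hprod
  exact hprod

lemma Dominates.irrefl (hm : ∀ y n, 0 < m y n) (y : α) : ¬ Dominates m y y := by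
  simpa only [Dominates, div_self (hm y _).ne'] using not_tendsto_const_atTop (1 : ℝ) atTop

lemma Comparable.symm (hm : ∀ y n, 0 < m y n) (h : Comparable m y y') : Comparable m y' y := by
  obtain ⟨M, hM, hb⟩ := h
  refine ⟨M, hM, fun n => ?_⟩
  have hr : 0 < m y n / m y' n := div_pos (hm y n) (hm y' n)
  rw [← inv_div (m y n), one_div M]
  exact ⟨inv_anti₀ hr (hb n).2,
    inv_le_of_inv_le₀ (by linarith) (by simpa only [one_div] using (hb n).1)⟩

lemma Dominates.trans_comparable (hm : ∀ y n, 0 < m y n) (h : Dominates m y y')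
    (h' : Comparable m y' y'') : Dominates m y y'' := by
  obtain ⟨M, hM, hb⟩ := h'
  refine tendsto_atTop_mono (fun n => ?_) (h.atTop_mul_const (one_div_pos.2 (by linarith : 0 < M)))
  calc m y n / m y' n * (1 / M) ≤ m y n / m y' n * (m y' n / m y'' n) :=
        mul_le_mul_of_nonneg_left (hb n).1 (div_pos (hm y n) (hm y' n)).le
    _ = m y n / m y'' n := div_mul_div_cancel₀ (hm y' n).ne'

lemma exists_uniform_comparable (s : Finset (α × α)) (h : ∀ p ∈ s, Comparable m p.1 p.2) :
    ∃ M, 1 < M ∧ ∀ p ∈ s, ∀ n, 1 / M ≤ m p.1 n / m p.2 n ∧ m p.1 n / m p.2 n ≤ M := by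
  have hev : ∀ p ∈ s, ∀ᶠ M in atTop, ∀ n, 1 / M ≤ m p.1 n / m p.2 n ∧ m p.1 n / m p.2 n ≤ M := by
    intro p hp
    obtain ⟨M₀, hM₀, hb⟩ := h p hp
    filter_upwards [eventually_ge_atTop M₀] with M hM n
    exact ⟨(one_div_le_one_div_of_le (by linarith) hM).trans (hb n).1, (hb n).2.trans hM⟩
  exact ((eventually_gt_atTop 1).and ((eventually_all_finset s).2 hev)).exists

lemma trichotomy_of_tendsto_ofReal {r : ℕ → ℝ} (hr : ∀ n, 0 < r n) {L : ENNReal}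
    (h : Tendsto (fun n => ENNReal.ofReal (r n)) atTop (𝓝 L)) :
    Tendsto r atTop atTop ∨ Tendsto (fun n => (r n)⁻¹) atTop atTop ∨
      ∃ M, 1 < M ∧ ∀ n, 1 / M ≤ r n ∧ r n ≤ M := by
  rcases eq_or_ne L ⊤ with rfl | hL
  · exact Or.inl (ENNReal.tendsto_ofReal_nhds_top.1 h)
  have hlim : Tendsto r atTop (𝓝 L.toReal) :=
    ((ENNReal.tendsto_toReal hL).comp h).congr fun n => ENNReal.toReal_ofReal (hr n).le
  rcases ENNReal.toReal_nonneg.eq_or_lt with h0 | hpos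
  · rw [← h0] at hlim
    exact Or.inr (Or.inl (tendsto_nhdsWithin_iff.2 ⟨hlim, .of_forall hr⟩).inv_tendsto_nhdsGT_zero)
  · exact Or.inr (Or.inr (exists_bounds_of_tendsto_pos hr hpos hlim))

/-- All ratios `m y / m y'` converge in `[0, ∞]` along one subsequence, by compactness of
`[0, ∞]^(α × α)`. -/
lemma exists_subseq_asymptoticallyOrdered [Countable α] (hm : ∀ y n, 0 < m y n) :
    ∃ φ : ℕ → ℕ, StrictMono φ ∧ AsymptoticallyOrdered fun y n => m y (φ n) := by
  obtain ⟨L, φ, hφ, hL⟩ :=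
    CompactSpace.tendsto_subseq fun n (p : α × α) => ENNReal.ofReal (m p.1 n / m p.2 n)
  refine ⟨φ, hφ, fun y y' => ?_⟩
  simpa only [Dominates, Comparable, inv_div] using trichotomy_of_tendsto_ofReal
    (fun n => div_pos (hm y (φ n)) (hm y' (φ n))) (((continuous_apply (y, y')).tendsto _).comp hL)

open Classical in
noncomputable def domRank (m : α → ℕ → ℝ) (C : Finset α) (y : α) : ℕ :=
  (C.filter (Dominates m · y)).card

variable {C : Finset α}

lemma domRank_lt_of_dominates (hm : ∀ y n, 0 < m y n) (hy : y ∈ C) (h : Dominates m y y') :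
    domRank m C y < domRank m C y' := by
  classical
  unfold domRank
  refine Finset.card_lt_card ⟨fun z hz => ?_, fun hsub => ?_⟩
  · rw [Finset.mem_filter] at hz ⊢
    exact ⟨hz.1, hz.2.trans hm h⟩
  · exact Dominates.irrefl hm y (Finset.mem_filter.1 (hsub (Finset.mem_filter.2 ⟨hy, h⟩))).2

lemma domRank_eq_of_comparable (hm : ∀ y n, 0 < m y n) (h : Comparable m y y') :
    domRank m C y = domRank m C y' := by
  classical
  unfold domRank
  congr 1
  exact Finset.filter_congr fun z _ =>
    ⟨fun hz => hz.trans_comparable hm h, fun hz => hz.trans_comparable hm (h.symm hm)⟩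

lemma dominates_of_domRank_lt (hm : ∀ y n, 0 < m y n) (htri : AsymptoticallyOrdered m)
    (hy' : y' ∈ C) (h : domRank m C y < domRank m C y') : Dominates m y y' := by
  rcases htri y y' with h' | h' | h'
  · exact h'
  · exact absurd (domRank_lt_of_dominates hm hy' h') (by omega)
  · exact absurd (domRank_eq_of_comparable (C := C) hm h') (by omega)

lemma comparable_of_domRank_eq (hm : ∀ y n, 0 < m y n) (htri : AsymptoticallyOrdered m)
    (hy : y ∈ C) (hy' : y' ∈ C)
    (h : domRank m C y = domRank m C y') : Comparable m y y' := by
  rcases htri y y' with h' | h' | h'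
  · exact absurd (domRank_lt_of_dominates hm hy h') (by omega)
  · exact absurd (domRank_lt_of_dominates hm hy' h') (by omega)
  · exact h'

end Dominance

lemma exists_subseq_tendsto_asymptoticallyOrdered {N : ℕ} {u : ℕ → Fin N → ℝ} {B : ℝ}
    (hu : ∀ n i, 0 < u n i) (hB : ∀ n i, u n i ≤ B) :
    ∃ φ : ℕ → ℕ, StrictMono φ ∧ ∃ z, (∀ i, 0 ≤ z i) ∧ Tendsto (fun n => u (φ n)) atTop (𝓝 z) ∧
      AsymptoticallyOrdered fun y n => monom (u (φ n)) y := by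
  obtain ⟨z, hz, φ, hφ, hxz⟩ := (isCompact_Icc (a := 0) (b := fun _ => B)).tendsto_subseq
    fun n => ⟨fun i => (hu n i).le, hB n⟩
  obtain ⟨ψ, hψ, htri⟩ := exists_subseq_asymptoticallyOrdered
    (m := fun y n => monom (u (φ n)) y) fun y n => monom_pos (hu _) y
  exact ⟨φ ∘ ψ, hφ.comp hψ, z, hz.1, hxz.comp hψ.tendsto_atTop, htri⟩

/-- The tiers are the level sets of `domRank`, listed by increasing rank. -/
theorem exists_partitionedAlong {N : ℕ} {C : Finset (Fin N → ℕ)} (hC : C.Nonempty)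
    {u : ℕ → Fin N → ℝ} (hu : ∀ n i, 0 < u n i)
    (htri : AsymptoticallyOrdered fun y n => monom (u n) y) :
    ∃ (P : ℕ) (_ : 0 < P) (T : Fin P → Set (Fin N → ℕ)) (M : ℝ), PartitionedAlong C u T M := by
  classical
  set m : (Fin N → ℕ) → ℕ → ℝ := fun y n => monom (u n) y
  have hm : ∀ y n, 0 < m y n := fun y n => monom_pos (hu n) y
  set V := C.image (domRank m C)
  let e := V.orderEmbOfFin rfl
  obtain ⟨M, hM, hMb⟩ := exists_uniform_comparable (m := m)
    ((C ×ˢ C).filter fun p => domRank m C p.1 = domRank m C p.2) fun p hp => by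
      simp only [Finset.mem_filter, Finset.mem_product] at hp
      exact comparable_of_domRank_eq hm htri hp.1.1 hp.1.2 hp.2
  refine ⟨V.card, (hC.image _).card_pos, fun i => {y | y ∈ C ∧ domRank m C y = e i}, M, hM,
    fun i => ?_, fun i j hij => ?_, ?_, fun i y hy y' hy' n => ?_, fun i j hij y hy y' hy' => ?_⟩
  · obtain ⟨y, hy, hyi⟩ := Finset.mem_image.1 (V.orderEmbOfFin_mem rfl i)
    exact ⟨y, hy, hyi⟩
  · exact Set.disjoint_left.2 fun y hi hj => hij (e.injective (hi.2.symm.trans hj.2))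
  · ext y
    simp only [Set.mem_iUnion, Set.mem_ofPred_eq, Finset.mem_coe]
    refine ⟨fun ⟨_, hy, _⟩ => hy, fun hy => ?_⟩
    obtain ⟨i, hi⟩ : domRank m C y ∈ Set.range e := by
      rw [V.range_orderEmbOfFin]
      exact Finset.mem_image_of_mem _ hy
    exact ⟨i, hy, hi.symm⟩
  · exact hMb (y', y) (by simp [hy.1, hy'.1, hy.2, hy'.2]) n
  · exact dominates_of_domRank_lt hm htri hy'.1 (by rw [hy.2, hy'.2]; exact e.strictMono hij)

section PartitionedAlong

variable {N P : ℕ} {C : Finset (Fin N → ℕ)} {u : ℕ → Fin N → ℝ} {T : Fin P → Set (Fin N → ℕ)}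
  {M : ℝ}

lemma PartitionedAlong.exists_mem (h : PartitionedAlong C u T M) {y : Fin N → ℕ} (hy : y ∈ C) :
    ∃ i, y ∈ T i := by
  rw [← Set.mem_iUnion, h.2.2.2.1]
  exact hy

lemma PartitionedAlong.tendsto_div_of_mem_zero (h : PartitionedAlong C u T M) (hP : 0 < P)
    {a b : Fin N → ℕ} (ha : a ∈ T ⟨0, hP⟩) (hb : b ∈ C) (hb0 : b ∉ T ⟨0, hP⟩) :
    Tendsto (fun n => monom (u n) a / monom (u n) b) atTop atTop := by
  obtain ⟨j, hj⟩ := h.exists_mem hb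
  exact h.2.2.2.2.2 _ j (lt_of_le_of_ne (Nat.zero_le j.val) fun h0 => hb0 (by rwa [h0])) a ha b hj

lemma PartitionedAlong.eventually_monom_le (h : PartitionedAlong C u T M) (hu : ∀ n i, 0 < u n i)
    (hP : 0 < P) {a : Fin N → ℕ} (ha : a ∈ T ⟨0, hP⟩) :
    ∀ᶠ n in atTop, ∀ y ∈ C, monom (u n) y ≤ M * monom (u n) a := by
  rw [eventually_all_finset]
  intro y hy
  by_cases hy0 : y ∈ T ⟨0, hP⟩
  · exact .of_forall fun n => (div_le_iff₀ (monom_pos (hu n) a)).1 (h.2.2.2.2.1 _ a ha y hy0 n).2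
  · filter_upwards [(h.tendsto_div_of_mem_zero hP ha hy hy0).eventually_ge_atTop 1] with n hn
    have hya := (one_le_div (monom_pos (hu n) y)).1 hn
    nlinarith [h.1, monom_pos (hu n) a]

end PartitionedAlong

lemma WeaklyReversible.exists_mem_not_mem {N : ℕ} {R : Finset ((Fin N → ℕ) × (Fin N → ℕ))}
    (hwr : WeaklyReversible R) {S : Set (Fin N → ℕ)} {y y' : Fin N → ℕ} (hy : y ∈ S)
    (hy' : y' ∉ S) (h : Relation.ReflTransGen (symStep R) y y') : ∃ r ∈ R, r.1 ∈ S ∧ r.2 ∉ S := by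
  by_contra! hclosed
  have hdir := hwr y y' h
  refine hy' ?_
  clear hy' h
  induction hdir with
  | refl => exact hy
  | tail _ hbc ih => exact hclosed _ hbc ih

theorem eventually_sum_neg_of_dominates {α : Type*} [DecidableEq α] {R : Finset (α × α)}
    {k : α × α → ℕ → ℝ} {m : α → ℕ → ℝ} {η K A : ℝ} (c : α × α → ℝ) (hη : 0 < η)
    (hk : ∀ r ∈ R, ∀ n, η ≤ k r n ∧ k r n ≤ K) (hm : ∀ y n, 0 < m y n) {a b : α}
    (hab : (a, b) ∈ R) (hdom : Dominates m a b)
    (hA : ∀ᶠ n in atTop, ∀ r ∈ R, m r.1 n ≤ A * m a n ∧ m r.2 n ≤ A * m a n) :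
    ∀ᶠ n in atTop,
      ∑ r ∈ R, k r n * m r.1 n * (Real.log (m r.2 n) - Real.log (m r.1 n) - c r) < 0 := by
  set S := ∑ r ∈ R.erase (a, b), K * A * (1 + |c r|)
  have hlog : Tendsto (fun n => Real.log (m a n) - Real.log (m b n)) atTop atTop := by
    simpa only [Function.comp_def, Real.log_div (hm a _).ne' (hm b _).ne'] using
      Real.tendsto_log_atTop.comp hdom
  filter_upwards [hA, hlog.eventually_gt_atTop (|S| / η + |c (a, b)|)] with n hAn hn
  have hrest : ∑ r ∈ R.erase (a, b),
      k r n * m r.1 n * (Real.log (m r.2 n) - Real.log (m r.1 n) - c r) ≤ S * m a n := by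
    rw [Finset.sum_mul]
    refine Finset.sum_le_sum fun r hr => ?_
    have hr := Finset.mem_of_mem_erase hr
    have hkr := hk r hr n
    calc _ ≤ K * (A * m a n) * (1 + |c r|) := mul_mul_log_sub_log_sub_le (hη.le.trans hkr.1)
          hkr.2 (hm _ n) (hm _ n) (hAn r hr).1 (hAn r hr).2
      _ = _ := by ring
  have hD : Real.log (m b n) - Real.log (m a n) - c (a, b) < -(|S| / η) := by
    linarith [neg_le_abs (c (a, b))]
  have hD0 : Real.log (m b n) - Real.log (m a n) - c (a, b) ≤ 0 :=
    hD.le.trans (neg_nonpos.2 (by positivity))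
  have hdominant : k (a, b) n * m a n * (Real.log (m b n) - Real.log (m a n) - c (a, b)) <
      -|S| * m a n :=
    calc _ ≤ η * m a n * (Real.log (m b n) - Real.log (m a n) - c (a, b)) :=
          mul_le_mul_of_nonpos_right (mul_le_mul_of_nonneg_right (hk _ hab n).1 (hm a n).le) hD0
      _ < η * m a n * (-(|S| / η)) := mul_lt_mul_of_pos_left hD (mul_pos hη (hm a n))
      _ = -|S| * m a n := by field_simp
  rw [← Finset.add_sum_erase R _ hab]
  linarith [mul_nonneg (sub_nonneg.2 (le_abs_self S)) (hm a n).le]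

lemma reactions_nonempty_of_tendsto_ciInf {N : ℕ} [Nonempty (Fin N)]
    {R : Finset ((Fin N → ℕ) × (Fin N → ℕ))} {κ : ((Fin N → ℕ) × (Fin N → ℕ)) → ℝ → ℝ}
    {x : ℝ → Fin N → ℝ} (hpos : ∀ i, 0 < x 0 i)
    (hODE : ∀ t : ℝ, 0 ≤ t →
      HasDerivAt x (∑ r ∈ R, (κ r t * monom (x t) r.1) • (cv r.2 - cv r.1)) t)
    (hdist : Tendsto (fun t => ⨅ i, x t i) atTop (𝓝 0)) : R.Nonempty := by
  rw [Finset.nonempty_iff_ne_empty]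
  rintro rfl
  have hconst : ∀ t, 0 ≤ t → x t = x 0 := fun t =>
    eq_of_hasDerivAt_zero (by simpa only [Finset.sum_empty] using hODE)
  have hlim : Tendsto (fun _ : ℝ => ⨅ i, x 0 i) atTop (𝓝 0) :=
    hdist.congr' ((eventually_ge_atTop 0).mono fun t ht => by rw [hconst t ht])
  exact (ciInf_pos_of_finite hpos).ne' (tendsto_nhds_unique tendsto_const_nhds hlim)

theorem PartitionedAlong.isUnionOfLinkageClasses_zero {N P : ℕ} {C : Finset (Fin N → ℕ)}
    {R : Finset ((Fin N → ℕ) × (Fin N → ℕ))} (hnet : IsNetwork C R) (hwr : WeaklyReversible R)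
    {u : ℕ → Fin N → ℝ} (hu : ∀ n i, 0 < u n i) {T : Fin P → Set (Fin N → ℕ)} {M : ℝ}
    (hT : PartitionedAlong C u T M) (hP : 0 < P) {k : (Fin N → ℕ) × (Fin N → ℕ) → ℕ → ℝ}
    {η K : ℝ} (c : (Fin N → ℕ) × (Fin N → ℕ) → ℝ) (hη : 0 < η)
    (hk : ∀ r ∈ R, ∀ n, η ≤ k r n ∧ k r n ≤ K)
    (hV : ∀ n, 0 ≤ ∑ r ∈ R, k r n * monom (u n) r.1 *
      (Real.log (monom (u n) r.2) - Real.log (monom (u n) r.1) - c r)) :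
    IsUnionOfLinkageClasses C R (T ⟨0, hP⟩) := by
  classical
  refine ⟨hT.2.1 _, fun y hy y' _ hyy' => ?_⟩
  by_contra hy'
  obtain ⟨⟨a, b⟩, hab, ha, hb⟩ := hwr.exists_mem_not_mem hy hy' hyy'
  obtain ⟨n, hn⟩ := (eventually_sum_neg_of_dominates c hη hk (fun y n => monom_pos (hu n) y) hab
    (hT.tendsto_div_of_mem_zero hP ha (hnet.1 _ hab).2.1 hb)
    ((hT.eventually_monom_le hu hP ha).mono fun n hn r hr =>
      ⟨hn _ (hnet.1 r hr).1, hn _ (hnet.1 r hr).2.1⟩)).exists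
  exact hn.not_ge (hV n)

/-- For a bounded trajectory of a weakly reversible non-autonomous mass-action system with
bounded kinetics that approaches the boundary of the positive orthant, either (C1) every
Lyapunov function `V_x̄` eventually strictly decreases along the trajectory, or (C2) there
is a sequence of times `t n → ∞` along which the trajectory converges to a boundary point,
the complexes are partitioned along the corresponding trajectory points, and the highest
tier is a union of linkage classes. -/
theorem stmt_5 {N : ℕ} (hN : 0 < N)
    (C : Finset (Fin N → ℕ)) (R : Finset ((Fin N → ℕ) × (Fin N → ℕ)))
    (hnet : IsNetwork C R) (hwr : WeaklyReversible R)
    (κ : ((Fin N → ℕ) × (Fin N → ℕ)) → ℝ → ℝ) (η : ℝ) (hη : 0 < η)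
    (hκ : ∀ r ∈ R, ∀ t : ℝ, 0 ≤ t → η < κ r t ∧ κ r t < 1 / η)
    (x : ℝ → Fin N → ℝ)
    (hpos : ∀ t : ℝ, 0 ≤ t → ∀ i, 0 < x t i)
    (hODE : ∀ t : ℝ, 0 ≤ t →
      HasDerivAt x (∑ r ∈ R, (κ r t * monom (x t) r.1) • (cv r.2 - cv r.1)) t)
    (hbdd : ∃ B : ℝ, ∀ t : ℝ, 0 ≤ t → ∀ i, x t i ≤ B)
    (hdist : Tendsto (fun t => ⨅ i, x t i) atTop (nhds 0)) :
    (∀ xb : Fin N → ℝ, (∀ i, 0 < xb i) → ∃ T : ℝ, 0 < T ∧ ∀ t > T,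
        (∑ r ∈ R, κ r t * monom (x t) r.1 *
          (∑ i, (cv r.2 i - cv r.1 i) * (Real.log (x t i) - Real.log (xb i)))) < 0) ∨
    (∃ tn : ℕ → ℝ, (∀ n, 0 ≤ tn n) ∧ Tendsto tn atTop atTop ∧
      ∃ z : Fin N → ℝ, (∀ i, 0 ≤ z i) ∧ (∃ i, z i = 0) ∧
        Tendsto (fun n => x (tn n)) atTop (nhds z) ∧
        ∃ (P : ℕ) (hP : 0 < P) (T : Fin P → Set (Fin N → ℕ)) (M : ℝ),
          PartitionedAlong C (fun n => x (tn n)) T M ∧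
          IsUnionOfLinkageClasses C R (T ⟨0, hP⟩)) := by
  have : Nonempty (Fin N) := ⟨⟨0, hN⟩⟩
  refine or_iff_not_imp_left.2 fun hC1 => ?_
  push Not at hC1
  obtain ⟨xb, -, hV⟩ := hC1
  choose s hs hVs using fun n : ℕ => hV ((n : ℝ) + 1) (by positivity)
  have hs0 : ∀ n, 0 ≤ s n := fun n => by linarith [hs n, (n.cast_nonneg : (0 : ℝ) ≤ n)]
  have hstop : Tendsto s atTop atTop :=
    tendsto_atTop_mono (fun n => by linarith [hs n]) tendsto_natCast_atTop_atTop
  obtain ⟨B, hB⟩ := hbdd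
  obtain ⟨φ, hφ, z, hz, hxz, htri⟩ :=
    exists_subseq_tendsto_asymptoticallyOrdered (fun n => hpos _ (hs0 n)) fun n => hB _ (hs0 n)
  have hu : ∀ n i, 0 < x (s (φ n)) i := fun n => hpos _ (hs0 _)
  have ht : Tendsto (s ∘ φ) atTop atTop := hstop.comp hφ.tendsto_atTop
  obtain ⟨r₀, hr₀⟩ := reactions_nonempty_of_tendsto_ciInf (hpos 0 le_rfl) hODE hdist
  obtain ⟨P, hP, T, M, hT⟩ := exists_partitionedAlong (C := C) ⟨r₀.1, (hnet.1 r₀ hr₀).1⟩ hu htri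
  refine ⟨s ∘ φ, fun n => hs0 _, ht, z, hz, exists_eq_zero_of_tendsto_ciInf hxz (hdist.comp ht),
    hxz, P, hP, T, M, hT, hT.isUnionOfLinkageClasses_zero hnet hwr hu hP
      (k := fun r n => κ r (s (φ n))) (fun r => ∑ i, (cv r.2 i - cv r.1 i) * Real.log (xb i)) hη
      (fun r hr n => (hκ r hr _ (hs0 _)).imp le_of_lt le_of_lt) fun n => ?_⟩
  simpa only [sum_mul_log_sub_log_eq (hu n) xb] using hVs (φ n)
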